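/- arXiv:1612.02681 — 7 statements merged into one kernel-verified Lean document; each statement's English description precedes it below -/
import Mathlib

section
/- Let Ã and Ã' be two proper ordered lower block triangular matrices in ℂ^{4n×4n} (with respect to the block partition 2n + 2n), and suppose Ã' = T Ã T⁻¹ for some invertible T ∈ ℂ^{4n×4n}. Then T is lower block triangular, i.e. its upper-right 2n×2n block is zero. -/
open Matrix

noncomputable section

/-- The canonical equivalence `Fin n ⊕ Fin n ≃ Fin (2*n)`. -/
def dEquiv (n : ℕ) : Fin n ⊕ Fin n ≃ Fin (2*n) :=
  finSumFinEquiv.trans (finCongr (two_mul n).symm)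

/-- The matrix `J_n = diag(1_n, -1_n)`. -/
def Jmat (n : ℕ) : Matrix (Fin (2*n)) (Fin (2*n)) ℂ :=
  Matrix.reindex (dEquiv n) (dEquiv n) (Matrix.fromBlocks 1 0 0 (-1))

/-- `Z♭ := J_b Zᴴ J_a` for `Z : ℂ^{2a × 2b}`. -/
def flat {a b : ℕ} (Z : Matrix (Fin (2*a)) (Fin (2*b)) ℂ) :
    Matrix (Fin (2*b)) (Fin (2*a)) ℂ :=
  Jmat b * Zᴴ * Jmat a

/-- A matrix is doubled-up if it has the block form `[X₋, X₊; conj X₊, conj X₋]`. -/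
def DoubledUp {a b : ℕ} (X : Matrix (Fin (2*a)) (Fin (2*b)) ℂ) : Prop :=
  ∃ Xm Xp : Matrix (Fin a) (Fin b) ℂ,
    X = Matrix.reindex (dEquiv a) (dEquiv b)
      (Matrix.fromBlocks Xm Xp (Xp.map (starRingEnd ℂ)) (Xm.map (starRingEnd ℂ)))

/-- `S` is ♭-unitary if `S♭S = SS♭ = 1`. -/
def FlatUnitary {m : ℕ} (S : Matrix (Fin (2*m)) (Fin (2*m)) ℂ) : Prop :=
  flat S * S = 1 ∧ S * flat S = 1

/-- `S` is symplectic if it is ♭-unitary and doubled-up. -/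
def Symplectic {m : ℕ} (S : Matrix (Fin (2*m)) (Fin (2*m)) ℂ) : Prop :=
  DoubledUp S ∧ FlatUnitary S

/-- The vacuum covariance matrix `V_vac = [1_m, 0; 0, 0]`. -/
def Vvac (m : ℕ) : Matrix (Fin (2*m)) (Fin (2*m)) ℂ :=
  Matrix.reindex (dEquiv m) (dEquiv m) (Matrix.fromBlocks 1 0 0 0)

/-- A quantum linear system: doubled-up matrices satisfying physical realisability. -/
def IsQLS {n m : ℕ} (A : Matrix (Fin (2*n)) (Fin (2*n)) ℂ)
    (C : Matrix (Fin (2*m)) (Fin (2*n)) ℂ) : Prop :=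
  DoubledUp A ∧ DoubledUp C ∧ A + flat A + flat C * C = 0

/-- The transfer function `Ξ(s) = 1 - C (s - A)⁻¹ C♭`. -/
def transferFn {n m : ℕ} (A : Matrix (Fin (2*n)) (Fin (2*n)) ℂ)
    (C : Matrix (Fin (2*m)) (Fin (2*n)) ℂ) (s : ℂ) :
    Matrix (Fin (2*m)) (Fin (2*m)) ℂ :=
  1 - C * (s • (1 : Matrix (Fin (2*n)) (Fin (2*n)) ℂ) - A)⁻¹ * flat C

/-- The power spectrum with vacuum input: `Ψ(s) = Ξ(s) V_vac Ξ(-s̄)ᴴ`. -/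
def powerSpectrum {n m : ℕ} (A : Matrix (Fin (2*n)) (Fin (2*n)) ℂ)
    (C : Matrix (Fin (2*m)) (Fin (2*n)) ℂ) (s : ℂ) :
    Matrix (Fin (2*m)) (Fin (2*m)) ℂ :=
  transferFn A C s * Vvac m * (transferFn A C (-(starRingEnd ℂ s)))ᴴ

/-- The set of points at which the power spectrum is defined. -/
def psDefined {n : ℕ} (A : Matrix (Fin (2*n)) (Fin (2*n)) ℂ) (s : ℂ) : Prop :=
  s ∉ spectrum ℂ A ∧ (-(starRingEnd ℂ s)) ∉ spectrum ℂ A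

/-- Hurwitz stability: all eigenvalues have strictly negative real part. -/
def Hurwitz {I : Type*} [Fintype I] [DecidableEq I] (A : Matrix I I ℂ) : Prop :=
  ∀ lam ∈ spectrum ℂ A, lam.re < 0

/-- The controllability matrix `[B, AB, …, A^{N-1}B]` (columns indexed by pairs). -/
def ctrbMat {I J : Type*} [Fintype I] [DecidableEq I] [Fintype J]
    (A : Matrix I I ℂ) (B : Matrix I J ℂ) :
    Matrix I (Fin (Fintype.card I) × J) ℂ :=
  Matrix.of fun i p => (A ^ (p.1 : ℕ) * B) i p.2

/-- `(A, B)` is controllable if the controllability matrix has full rank. -/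
def Controllable {I J : Type*} [Fintype I] [DecidableEq I] [Fintype J] [DecidableEq J]
    (A : Matrix I I ℂ) (B : Matrix I J ℂ) : Prop :=
  (ctrbMat A B).rank = Fintype.card I

/-- The observability matrix `[C; CA; …; CA^{N-1}]` (rows indexed by pairs). -/
def obsMat {I J : Type*} [Fintype I] [DecidableEq I] [Fintype J]
    (C : Matrix J I ℂ) (A : Matrix I I ℂ) :
    Matrix (Fin (Fintype.card I) × J) I ℂ :=
  Matrix.of fun p j => (C * A ^ (p.1 : ℕ)) p.2 j

/-- `(C, A)` is observable if the observability matrix has full rank. -/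
def Observable {I J : Type*} [Fintype I] [DecidableEq I] [Fintype J]
    (C : Matrix J I ℂ) (A : Matrix I I ℂ) : Prop :=
  (obsMat C A).rank = Fintype.card I

/-- Minimality of a QLS `(A, C)`, with input matrix `B = -C♭`. -/
def MinimalQLS {n m : ℕ} (A : Matrix (Fin (2*n)) (Fin (2*n)) ℂ)
    (C : Matrix (Fin (2*m)) (Fin (2*n)) ℂ) : Prop :=
  Controllable A (-(flat C)) ∧ Observable C A

/-- Global minimality for vacuum input: no strictly smaller QLS has the same
power spectrum wherever both are defined. -/
def GloballyMinimal {n m : ℕ} (A : Matrix (Fin (2*n)) (Fin (2*n)) ℂ)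
    (C : Matrix (Fin (2*m)) (Fin (2*n)) ℂ) : Prop :=
  ¬ ∃ n' : ℕ, n' < n ∧ ∃ (A' : Matrix (Fin (2*n')) (Fin (2*n')) ℂ)
      (C' : Matrix (Fin (2*m)) (Fin (2*n')) ℂ), IsQLS A' C' ∧
      ∀ s : ℂ, psDefined A s → psDefined A' s →
        powerSpectrum A C s = powerSpectrum A' C' s

/-- The `Ã` matrix of the cascade realisation of the power spectrum. -/
def cascadeA {n m : ℕ} (A : Matrix (Fin (2*n)) (Fin (2*n)) ℂ)
    (C : Matrix (Fin (2*m)) (Fin (2*n)) ℂ) :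
    Matrix (Fin (2*n) ⊕ Fin (2*n)) (Fin (2*n) ⊕ Fin (2*n)) ℂ :=
  Matrix.fromBlocks (-(flat A)) 0 (flat C * Vvac m * C) A

/-- The `B̃` matrix of the cascade realisation. -/
def cascadeB {n m : ℕ} (A : Matrix (Fin (2*n)) (Fin (2*n)) ℂ)
    (C : Matrix (Fin (2*m)) (Fin (2*n)) ℂ) :
    Matrix (Fin (2*n) ⊕ Fin (2*n)) (Fin (2*m)) ℂ :=
  Matrix.fromRows (-(flat C)) (-(flat C * Vvac m))

/-- The `C̃` matrix of the cascade realisation. -/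
def cascadeC {n m : ℕ} (A : Matrix (Fin (2*n)) (Fin (2*n)) ℂ)
    (C : Matrix (Fin (2*m)) (Fin (2*n)) ℂ) :
    Matrix (Fin (2*m)) (Fin (2*n) ⊕ Fin (2*n)) ℂ :=
  Matrix.fromCols (-(Vvac m * C)) C

/-- `K := [J_n, 0; 0, -J_n]`. -/
def Kmat (n : ℕ) : Matrix (Fin (2*n) ⊕ Fin (2*n)) (Fin (2*n) ⊕ Fin (2*n)) ℂ :=
  Matrix.fromBlocks (Jmat n) 0 0 (-(Jmat n))

/-- `Σ := [0, 1; 1, 0]` (on the doubled index). -/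
def SigmaBig (n : ℕ) : Matrix (Fin (2*n) ⊕ Fin (2*n)) (Fin (2*n) ⊕ Fin (2*n)) ℂ :=
  Matrix.fromBlocks 0 1 1 0


/-- A matrix in `ℂ^{4n×4n}` (blocked as `2n + 2n`) is *proper ordered lower block
triangular*: it is lower block triangular, has `2n` linearly independent generalised
right-eigenvectors of the form `(0; y₂)` with eigenvalues of negative real part, and
`2n` linearly independent generalised left-eigenvectors of the form `(x₁, 0)` with
eigenvalues of positive real part. -/
def ProperLBT {n : ℕ}
    (X : Matrix (Fin (2*n) ⊕ Fin (2*n)) (Fin (2*n) ⊕ Fin (2*n)) ℂ) : Prop :=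
  (∀ i j, X (Sum.inl i) (Sum.inr j) = 0) ∧
  (∃ v : Fin (2*n) → (Fin (2*n) ⊕ Fin (2*n) → ℂ),
    LinearIndependent ℂ v ∧ ∀ i, (∀ j, v i (Sum.inl j) = 0) ∧
      ∃ lam : ℂ, lam.re < 0 ∧ ∃ k : ℕ, ((X - lam • 1) ^ k).mulVec (v i) = 0) ∧
  (∃ w : Fin (2*n) → (Fin (2*n) ⊕ Fin (2*n) → ℂ),
    LinearIndependent ℂ w ∧ ∀ i, (∀ j, w i (Sum.inr j) = 0) ∧
      ∃ mu : ℂ, 0 < mu.re ∧ ∃ k : ℕ, Matrix.vecMul (w i) ((X - mu • 1) ^ k) = 0)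

open Polynomial in
/-- Left and right generalised eigenvectors for distinct eigenvalues are orthogonal. -/
lemma gen_eig_orthogonal {I : Type*} [Fintype I] [DecidableEq I] (X : Matrix I I ℂ)
    (v w : I → ℂ) (lam mu : ℂ) (hne : lam ≠ mu) (k l : ℕ)
    (hv : ((X - lam • 1) ^ k).mulVec v = 0)
    (hw : Matrix.vecMul w ((X - mu • 1) ^ l) = 0) :
    w ⬝ᵥ v = 0 := by
  have hcop : IsCoprime ((Polynomial.X - C lam) ^ k) ((Polynomial.X - C mu) ^ l) :=
    (isCoprime_X_sub_C_of_isUnit_sub ((sub_ne_zero.2 hne).isUnit)).pow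
  obtain ⟨p, q, hpq⟩ := hcop
  have haP : aeval X ((Polynomial.X - C lam) ^ k) = (X - lam • 1) ^ k := by
    simp [Algebra.algebraMap_eq_smul_one]
  have haQ : aeval X ((Polynomial.X - C mu) ^ l) = (X - mu • 1) ^ l := by
    simp [Algebra.algebraMap_eq_smul_one]
  have h1 : aeval X (p * (Polynomial.X - C lam) ^ k)
      + aeval X (((Polynomial.X - C mu) ^ l) * q) = 1 := by
    rw [← map_add, mul_comm ((Polynomial.X - C mu) ^ l) q, hpq]; exact map_one _
  have := congrArg (fun M => w ⬝ᵥ M.mulVec v) h1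
  simp only [Matrix.one_mulVec, Matrix.add_mulVec, dotProduct_add, _root_.map_mul, haP, haQ] at this
  rw [← Matrix.mulVec_mulVec, hv, Matrix.mulVec_zero, dotProduct_zero,
    Matrix.dotProduct_mulVec, ← Matrix.vecMul_vecMul, hw, Matrix.zero_vecMul,
    zero_dotProduct, add_zero] at this
  exact this.symm

/-- A linearly independent family inside a subspace of matching finrank spans it. -/
lemma span_eq_of_li {d : ℕ} {V : Type*} [AddCommGroup V] [Module ℂ V] [FiniteDimensional ℂ V]
    (W : Submodule ℂ V) (hW : Module.finrank ℂ W = d) (v : Fin d → V)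
    (hli : LinearIndependent ℂ v) (hmem : ∀ i, v i ∈ W) :
    Submodule.span ℂ (Set.range v) = W := by
  refine Submodule.eq_of_le_of_finrank_le
    (Submodule.span_le.2 (Set.range_subset_iff.2 hmem)) ?_
  rw [hW, finrank_span_eq_card hli, Fintype.card_fin]

/-- Lemma 3: a similarity between two proper LBT matrices is itself
lower block triangular. -/
theorem similarity_of_properLBT_is_LBT {n : ℕ}
    (Atil Atil' T : Matrix (Fin (2*n) ⊕ Fin (2*n)) (Fin (2*n) ⊕ Fin (2*n)) ℂ)
    (hA : ProperLBT Atil) (hA' : ProperLBT Atil')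
    (hT : IsUnit T) (hsim : Atil' = T * Atil * T⁻¹) :
    ∀ i j, T (Sum.inl i) (Sum.inr j) = 0 := by
  classical
  obtain ⟨-, ⟨v, hvind, hv⟩, -⟩ := hA
  obtain ⟨-, -, ⟨w, hwind, hw⟩⟩ := hA'
  have hdet : IsUnit T.det := (Matrix.isUnit_iff_isUnit_det T).1 hT
  -- the two coordinate subspaces
  set W2 : Submodule ℂ ((Fin (2*n) ⊕ Fin (2*n)) → ℂ) :=
    LinearMap.ker (LinearMap.funLeft ℂ ℂ (Sum.inl : Fin (2*n) → Fin (2*n) ⊕ Fin (2*n)))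
    with hW2def
  set W1 : Submodule ℂ ((Fin (2*n) ⊕ Fin (2*n)) → ℂ) :=
    LinearMap.ker (LinearMap.funLeft ℂ ℂ (Sum.inr : Fin (2*n) → Fin (2*n) ⊕ Fin (2*n)))
    with hW1def
  have memW2 : ∀ x, x ∈ W2 ↔ ∀ j, x (Sum.inl j) = 0 := by
    intro x
    simp [hW2def, LinearMap.mem_ker, funext_iff, LinearMap.funLeft_apply]
  have memW1 : ∀ x, x ∈ W1 ↔ ∀ j, x (Sum.inr j) = 0 := by
    intro x
    simp [hW1def, LinearMap.mem_ker, funext_iff, LinearMap.funLeft_apply]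
  -- dimensions of the coordinate subspaces
  have hrank : ∀ (f : Fin (2*n) → Fin (2*n) ⊕ Fin (2*n)), Function.Injective f →
      Module.finrank ℂ (LinearMap.ker (LinearMap.funLeft ℂ ℂ f)) = 2*n := by
    intro f hf
    have hsurj : Function.Surjective (LinearMap.funLeft ℂ ℂ f) :=
      LinearMap.funLeft_surjective_of_injective ℂ ℂ f hf
    have h := LinearMap.finrank_range_add_finrank_ker (LinearMap.funLeft ℂ ℂ f)
    rw [LinearMap.range_eq_top.2 hsurj, finrank_top] at h
    have h1 : Module.finrank ℂ ((Fin (2*n) ⊕ Fin (2*n)) → ℂ) = 2*n + 2*n := by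
      simp [Module.finrank_pi]
    have h2 : Module.finrank ℂ (Fin (2*n) → ℂ) = 2*n := by
      simp [Module.finrank_pi]
    rw [h1, h2] at h
    omega
  have hW2rank : Module.finrank ℂ W2 = 2*n := hrank _ Sum.inl_injective
  have hW1rank : Module.finrank ℂ W1 = 2*n := hrank _ Sum.inr_injective
  -- the spans of the given eigenvector families
  have hvspan : Submodule.span ℂ (Set.range v) = W2 :=
    span_eq_of_li W2 hW2rank v hvind (fun i => (memW2 (v i)).2 (hv i).1)
  have hwspan : Submodule.span ℂ (Set.range w) = W1 :=
    span_eq_of_li W1 hW1rank w hwind (fun i => (memW1 (w i)).2 (hw i).1)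
  -- intertwining relation
  have hAT : Atil' * T = T * Atil := by
    rw [hsim, Matrix.nonsing_inv_mul_cancel_right _ _ hdet]
  have hcomm : ∀ (lam : ℂ) (k : ℕ),
      ((Atil' - lam • 1) ^ k) * T = T * ((Atil - lam • 1) ^ k) := by
    intro lam k
    induction k with
    | zero => simp
    | succ k ih =>
      have hstep : (Atil' - lam • 1) * T = T * (Atil - lam • 1) := by
        rw [Matrix.sub_mul, Matrix.mul_sub, hAT, Matrix.smul_mul, Matrix.one_mul,
          Matrix.mul_smul, Matrix.mul_one]
      rw [pow_succ, pow_succ, Matrix.mul_assoc, hstep, ← Matrix.mul_assoc, ih,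
        Matrix.mul_assoc]
  -- T maps each v i into W2
  have hTv : ∀ i, T.mulVec (v i) ∈ W2 := by
    intro i
    obtain ⟨lam, hlam, k, hk⟩ := (hv i).2
    have hu : ((Atil' - lam • 1) ^ k).mulVec (T.mulVec (v i)) = 0 := by
      rw [Matrix.mulVec_mulVec, hcomm lam k, ← Matrix.mulVec_mulVec, hk,
        Matrix.mulVec_zero]
    -- every element of W1 is orthogonal to T *ᵥ v i
    have hdot : ∀ x ∈ Submodule.span ℂ (Set.range w), x ⬝ᵥ T.mulVec (v i) = 0 := by
      intro x hx
      induction hx using Submodule.span_induction with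
      | mem x hx =>
        obtain ⟨j, rfl⟩ := hx
        obtain ⟨mu, hmu, l, hl⟩ := (hw j).2
        exact gen_eig_orthogonal Atil' (T.mulVec (v i)) (w j) lam mu
          (fun h => absurd (h ▸ hlam) (by simpa using hmu.le.not_gt)) k l hu hl
      | zero => simp
      | add x y _ _ hx hy => rw [add_dotProduct, hx, hy, add_zero]
      | smul a x _ hx => rw [smul_dotProduct, hx, smul_zero]
    rw [memW2]
    intro p
    have hsingle : (Pi.single (Sum.inl p) 1 : (Fin (2*n) ⊕ Fin (2*n)) → ℂ)
        ∈ Submodule.span ℂ (Set.range w) := by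
      rw [hwspan, memW1]
      intro j
      exact Pi.single_eq_of_ne (by simp) 1
    have := hdot _ hsingle
    rwa [single_dotProduct, one_mul] at this
  -- conclude
  intro i j
  have hsingle2 : (Pi.single (Sum.inr j) 1 : (Fin (2*n) ⊕ Fin (2*n)) → ℂ) ∈ W2 := by
    rw [memW2]
    intro p
    exact Pi.single_eq_of_ne (by simp) 1
  rw [← hvspan] at hsingle2
  have hmap : T.mulVec (Pi.single (Sum.inr j) 1) ∈ W2 := by
    have hle : Submodule.span ℂ (Set.range v) ≤ W2.comap T.mulVecLin := by
      rw [Submodule.span_le, Set.range_subset_iff]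
      intro i'
      simpa [Submodule.mem_comap, Matrix.mulVecLin_apply] using hTv i'
    simpa [Submodule.mem_comap, Matrix.mulVecLin_apply] using hle hsingle2
  have := (memW2 _).1 hmap i
  simpa using this

end
end

section
/- For any matrices A ∈ ℂ^{2n×2n} and C ∈ ℂ^{2m×2n}, the cascade matrix Ã := [−A♭, 0; C♭V_vac C, A] ∈ ℂ^{4n×4n} satisfies the structural symmetry Ã = −K Σ Ã† Σ K, where K := [J_n, 0; 0, −J_n] ∈ ℂ^{4n×4n} and Σ := [0, 1_{2n}; 1_{2n}, 0] ∈ ℂ^{4n×4n}. -/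
open Matrix

noncomputable section

lemma Jmat_herm (n : ℕ) : (Jmat n)ᴴ = Jmat n := by
  simp [Jmat, reindex_apply, conjTranspose_submatrix, fromBlocks_conjTranspose]

lemma Jmat_sq (n : ℕ) : Jmat n * Jmat n = 1 := by
  rw [Jmat, reindex_apply, submatrix_mul_equiv, fromBlocks_multiply]
  rw [show (1 : Matrix (Fin (2*n)) (Fin (2*n)) ℂ)
      = (1 : Matrix (Fin n ⊕ Fin n) _ ℂ).submatrix (dEquiv n).symm (dEquiv n).symm by simp]
  rw [← fromBlocks_one]
  simp

lemma Jmat_Vvac (m : ℕ) : Jmat m * Vvac m = Vvac m := by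
  rw [Jmat, Vvac, reindex_apply, reindex_apply, submatrix_mul_equiv, fromBlocks_multiply]
  simp

lemma Vvac_Jmat (m : ℕ) : Vvac m * Jmat m = Vvac m := by
  rw [Jmat, Vvac, reindex_apply, reindex_apply, submatrix_mul_equiv, fromBlocks_multiply]
  simp

lemma Vvac_herm (m : ℕ) : (Vvac m)ᴴ = Vvac m := by
  simp [Vvac, reindex_apply, conjTranspose_submatrix, fromBlocks_conjTranspose]

/-- the cascade matrix `Ã` satisfies the structural symmetry
`Ã = -K Σ Ã† Σ K`. -/
theorem cascadeA_structural_symmetry {n m : ℕ}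
    (A : Matrix (Fin (2*n)) (Fin (2*n)) ℂ) (C : Matrix (Fin (2*m)) (Fin (2*n)) ℂ) :
    cascadeA A C =
      -(Kmat n * SigmaBig n * (cascadeA A C)ᴴ * SigmaBig n * Kmat n) := by

  unfold cascadeA Kmat SigmaBig flat
  simp only [Matrix.fromBlocks_conjTranspose, Matrix.fromBlocks_multiply,
    Matrix.mul_one, Matrix.one_mul, Matrix.mul_zero, Matrix.zero_mul,
    add_zero, zero_add, Matrix.neg_mul, Matrix.mul_neg, conjTranspose_neg,
    conjTranspose_zero, neg_neg, Matrix.fromBlocks_neg, neg_zero,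
    conjTranspose_mul, Jmat_herm, Vvac_herm, conjTranspose_conjTranspose]
  have h22 : Jmat n * (Jmat n * (A * Jmat n)) * Jmat n = A := by
    rw [← Matrix.mul_assoc, ← Matrix.mul_assoc, Jmat_sq, Matrix.one_mul,
      Matrix.mul_assoc, Jmat_sq, Matrix.mul_one]
  have h21 : Jmat n * (Cᴴ * (Vvac m * (Jmat m * (C * Jmat n)))) * Jmat n
      = Jmat n * Cᴴ * Jmat m * Vvac m * C := by
    simp only [← Matrix.mul_assoc]
    rw [Matrix.mul_assoc _ (Jmat n) (Jmat n), Jmat_sq, Matrix.mul_one,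
        Matrix.mul_assoc _ (Vvac m) (Jmat m), Vvac_Jmat,
        Matrix.mul_assoc _ (Jmat m) (Vvac m), Jmat_Vvac]
  rw [h22, h21]

end
end

section
/- Let Ã, Ã' ∈ ℂ^{4n×4n} satisfy Ã = −KΣÃ†ΣK and Ã' = −KΣÃ'†ΣK, let T ∈ ℂ^{4n×4n} be invertible with Ã' = TÃT⁻¹, and let C̃, C̃' ∈ ℂ^{2m×4n} satisfy C̃' = C̃T⁻¹ and C̃ = C̃·KΣT†ΣKT. If moreover the observability matrix [C̃; C̃Ã; …; C̃Ã^{4n−1}] has rank 4n, then KΣT†ΣKT = 1_{4n}. -/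
open Matrix

noncomputable section

/-- Auxiliary: `(KΣ)² = -1`. -/
lemma KS_sq (n : ℕ) : (Kmat n * SigmaBig n) * (Kmat n * SigmaBig n) = -1 := by
  unfold Kmat SigmaBig
  rw [Matrix.fromBlocks_multiply, Matrix.fromBlocks_multiply]
  rw [show ((-1 : Matrix (Fin (2*n) ⊕ Fin (2*n)) (Fin (2*n) ⊕ Fin (2*n)) ℂ)) = Matrix.fromBlocks (-1) 0 0 (-1) by rw [show (Matrix.fromBlocks (-1) 0 0 (-1) : Matrix (Fin (2*n) ⊕ Fin (2*n)) (Fin (2*n) ⊕ Fin (2*n)) ℂ) = -(Matrix.fromBlocks 1 0 0 1) by rw [Matrix.fromBlocks_neg]; simp, Matrix.fromBlocks_one]]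
  simp [Jmat_sq]

/-- Auxiliary: `ΣK = -(KΣ)`. -/
lemma SK_eq (n : ℕ) : SigmaBig n * Kmat n = -(Kmat n * SigmaBig n) := by
  unfold Kmat SigmaBig
  rw [Matrix.fromBlocks_multiply, Matrix.fromBlocks_multiply]
  rw [Matrix.fromBlocks_neg]
  simp

/-- Auxiliary: from `x = M y M` and `M² = -1` deduce `y = M x M`. -/
lemma invol_helper {R : Type*} [Ring R] (M x y : R)
    (hMM : M * M = -1) (h : x = M * y * M) : y = M * x * M := by
  have hMM' : ∀ z : R, M * (M * z) = -z := fun z => by rw [← mul_assoc, hMM, neg_one_mul]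
  rw [h]
  simp only [mul_assoc, hMM']
  rw [neg_mul, mul_assoc, hMM, mul_neg_one, neg_neg]

/-- Auxiliary commutation lemma in a ring. -/
lemma comm_helper {R : Type*} [Ring R] (M T Ti TH THi A : R)
    (hMM : M * M = -1) (hTiT : Ti * T = 1) (hTHTHi : TH * THi = 1)
    (hE : T * A * Ti = M * THi * (M * A * M) * TH * M) :
    M * TH * M * T * A = A * (M * TH * M * T) := by
  have hMM' : ∀ x : R, M * (M * x) = -x := fun x => by rw [← mul_assoc, hMM, neg_one_mul]
  have hTH' : ∀ x : R, TH * (THi * x) = x := fun x => by rw [← mul_assoc, hTHTHi, one_mul]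
  have hE2 : T * A = M * (THi * (M * (A * (M * (TH * (M * T)))))) := by
    have h := congrArg (· * T) hE
    simp only [mul_assoc, hTiT, mul_one] at h
    simpa only [mul_assoc] using h
  calc M * TH * M * T * A = M * (TH * (M * (T * A))) := by simp only [mul_assoc]
    _ = A * (M * (TH * (M * T))) := by
        rw [hE2]
        simp only [hMM', hTH', mul_neg, neg_neg]
    _ = A * (M * TH * M * T) := by simp only [mul_assoc]

/-- Auxiliary: a matrix of full column rank can be cancelled on the left. -/
lemma full_rank_cancel {I J K : Type*} [Fintype I] [Fintype J] [DecidableEq I]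
    [Fintype K] [DecidableEq K]
    (O : Matrix J I ℂ) (h : O.rank = Fintype.card I)
    {X Y : Matrix I K ℂ} (hXY : O * X = O * Y) : X = Y := by
  have hinj : Function.Injective O.mulVecLin := by
    rw [← LinearMap.ker_eq_bot]
    have h1 := O.mulVecLin.finrank_range_add_finrank_ker
    unfold Matrix.rank at h
    rw [h, Module.finrank_pi] at h1
    have h0 : Module.finrank ℂ (LinearMap.ker O.mulVecLin) = 0 := by omega
    exact Submodule.finrank_eq_zero.mp h0
  ext i k
  have hcol : O.mulVecLin (fun a => X a k) = O.mulVecLin (fun a => Y a k) := by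
    funext j
    have hjk := congrFun (congrFun hXY j) k
    simpa [Matrix.mulVecLin_apply, Matrix.mulVec, dotProduct, Matrix.mul_apply] using hjk
  exact congrFun (hinj hcol) i

set_option maxHeartbeats 1000000 in
/-- Step 1 in Appendix B: under full-rank observability,
`KΣT†ΣKT = 1`. -/
theorem KSigmaT_eq_one {n m : ℕ}
    (Atil Atil' T : Matrix (Fin (2*n) ⊕ Fin (2*n)) (Fin (2*n) ⊕ Fin (2*n)) ℂ)
    (Ctil Ctil' : Matrix (Fin (2*m)) (Fin (2*n) ⊕ Fin (2*n)) ℂ)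
    (hA : Atil = -(Kmat n * SigmaBig n * Atilᴴ * SigmaBig n * Kmat n))
    (hA' : Atil' = -(Kmat n * SigmaBig n * Atil'ᴴ * SigmaBig n * Kmat n))
    (hT : IsUnit T) (hsim : Atil' = T * Atil * T⁻¹)
    (hC' : Ctil' = Ctil * T⁻¹)
    (hC : Ctil = Ctil * (Kmat n * SigmaBig n * Tᴴ * SigmaBig n * Kmat n * T))
    (hobs : Observable Ctil Atil) :
    Kmat n * SigmaBig n * Tᴴ * SigmaBig n * Kmat n * T = 1 := by
  have hMM : (Kmat n * SigmaBig n) * (Kmat n * SigmaBig n) = -1 := KS_sq n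
  have hSK : SigmaBig n * Kmat n = -(Kmat n * SigmaBig n) := SK_eq n
  have hform : ∀ X : Matrix (Fin (2*n) ⊕ Fin (2*n)) (Fin (2*n) ⊕ Fin (2*n)) ℂ,
      -(Kmat n * SigmaBig n * Xᴴ * SigmaBig n * Kmat n)
        = (Kmat n * SigmaBig n) * Xᴴ * (Kmat n * SigmaBig n) := by
    intro X
    rw [mul_assoc (Kmat n * SigmaBig n * Xᴴ), hSK, mul_neg, neg_neg]
  have hAM : Atil = (Kmat n * SigmaBig n) * Atilᴴ * (Kmat n * SigmaBig n) :=
    hA.trans (hform Atil)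
  have hAM' : Atil' = (Kmat n * SigmaBig n) * Atil'ᴴ * (Kmat n * SigmaBig n) :=
    hA'.trans (hform Atil')
  have hAH : Atilᴴ = (Kmat n * SigmaBig n) * Atil * (Kmat n * SigmaBig n) :=
    invol_helper (Kmat n * SigmaBig n) Atil Atilᴴ hMM hAM
  have hTdet : IsUnit T.det := (Matrix.isUnit_iff_isUnit_det T).mp hT
  have hTiT : T⁻¹ * T = 1 := Matrix.nonsing_inv_mul T hTdet
  have hTHdet : IsUnit Tᴴ.det := by
    rw [Matrix.det_conjTranspose]; exact hTdet.star
  have hTHTHi : Tᴴ * (Tᴴ)⁻¹ = 1 := Matrix.mul_nonsing_inv Tᴴ hTHdet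
  have hE : T * Atil * T⁻¹ = (Kmat n * SigmaBig n) * (Tᴴ)⁻¹
      * ((Kmat n * SigmaBig n) * Atil * (Kmat n * SigmaBig n)) * Tᴴ * (Kmat n * SigmaBig n) := by
    calc T * Atil * T⁻¹ = Atil' := hsim.symm
      _ = (Kmat n * SigmaBig n) * Atil'ᴴ * (Kmat n * SigmaBig n) := hAM'
      _ = _ := by
          rw [hsim, Matrix.conjTranspose_mul, Matrix.conjTranspose_mul,
            Matrix.conjTranspose_nonsing_inv, hAH]
          simp only [mul_assoc]
  have hcomm : (Kmat n * SigmaBig n) * Tᴴ * (Kmat n * SigmaBig n) * T * Atil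
      = Atil * ((Kmat n * SigmaBig n) * Tᴴ * (Kmat n * SigmaBig n) * T) :=
    comm_helper (Kmat n * SigmaBig n) T T⁻¹ Tᴴ (Tᴴ)⁻¹ Atil hMM hTiT hTHTHi hE
  have hQ : Kmat n * SigmaBig n * Tᴴ * SigmaBig n * Kmat n * T
      = -((Kmat n * SigmaBig n) * Tᴴ * (Kmat n * SigmaBig n) * T) := by
    rw [mul_assoc (Kmat n * SigmaBig n * Tᴴ) (SigmaBig n) (Kmat n), hSK, mul_neg, neg_mul]
  have hCQn : Ctil * ((Kmat n * SigmaBig n) * Tᴴ * (Kmat n * SigmaBig n) * T) = -Ctil := by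
    have h := hC
    rw [hQ, Matrix.mul_neg] at h
    simpa using congrArg Neg.neg h.symm
  have hp : Commute ((Kmat n * SigmaBig n) * Tᴴ * (Kmat n * SigmaBig n) * T) Atil := hcomm
  have key : ∀ k : ℕ, Ctil * Atil ^ k * ((Kmat n * SigmaBig n) * Tᴴ * (Kmat n * SigmaBig n) * T)
      = -(Ctil * Atil ^ k) := by
    intro k
    have hpow : Atil ^ k * ((Kmat n * SigmaBig n) * Tᴴ * (Kmat n * SigmaBig n) * T)
        = ((Kmat n * SigmaBig n) * Tᴴ * (Kmat n * SigmaBig n) * T) * Atil ^ k :=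
      Commute.symm (Commute.pow_right hp k)
    calc Ctil * Atil ^ k * ((Kmat n * SigmaBig n) * Tᴴ * (Kmat n * SigmaBig n) * T)
        = Ctil * (Atil ^ k * ((Kmat n * SigmaBig n) * Tᴴ * (Kmat n * SigmaBig n) * T)) :=
          Matrix.mul_assoc _ _ _
      _ = Ctil * (((Kmat n * SigmaBig n) * Tᴴ * (Kmat n * SigmaBig n) * T) * Atil ^ k) := by
          rw [hpow]
      _ = Ctil * ((Kmat n * SigmaBig n) * Tᴴ * (Kmat n * SigmaBig n) * T) * Atil ^ k :=
          (Matrix.mul_assoc _ _ _).symm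
      _ = -(Ctil * Atil ^ k) := by rw [hCQn, Matrix.neg_mul]
  have hOQ : obsMat Ctil Atil * ((Kmat n * SigmaBig n) * Tᴴ * (Kmat n * SigmaBig n) * T)
      = obsMat Ctil Atil
        * (-1 : Matrix (Fin (2*n) ⊕ Fin (2*n)) (Fin (2*n) ⊕ Fin (2*n)) ℂ) := by
    rw [Matrix.mul_neg, Matrix.mul_one]
    ext i j
    have h1 : (obsMat Ctil Atil * ((Kmat n * SigmaBig n) * Tᴴ * (Kmat n * SigmaBig n) * T)) i j
        = (Ctil * Atil ^ (i.1 : ℕ) * ((Kmat n * SigmaBig n) * Tᴴ * (Kmat n * SigmaBig n) * T)) i.2 j := by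
      simp only [obsMat, Matrix.mul_apply, Matrix.of_apply]
    rw [h1, key, Matrix.neg_apply, Matrix.neg_apply]
    rfl
  have hobs' : (obsMat Ctil Atil).rank = Fintype.card (Fin (2*n) ⊕ Fin (2*n)) := hobs
  have hQn : (Kmat n * SigmaBig n) * Tᴴ * (Kmat n * SigmaBig n) * T
      = (-1 : Matrix (Fin (2*n) ⊕ Fin (2*n)) (Fin (2*n) ⊕ Fin (2*n)) ℂ) :=
    full_rank_cancel (obsMat Ctil Atil) hobs' hOQ
  rw [hQ, hQn, neg_neg]

end
end

section
/- Let (A, C) and (A', C') be two quantum linear systems with n modes and m channels (doubled-up matrices satisfying A + A♭ + C♭C = 0 and A' + A'♭ + C'♭C' = 0), with cascade realisations (Ã, B̃, C̃) and (Ã', B̃', C̃') respectively. Let T₁, T₃, T₄ ∈ ℂ^{2n×2n} be such that for all integers k ≥ 0: C̃'Ã'^k = C̃Ã^k · [T₄♭, 0; −T₃♭, T₁♭], and C̃'Ã'^k B̃' = C̃Ã^k B̃. Then for every integer k ≥ 0: C̃Ã^k · [T₄♭ − T₁♭; −T₃♭] = 0. -/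
open Matrix

noncomputable section

/-- Auxiliary: the left block of `C̃ Ã^k`, defined recursively. -/
def Lrec {n m : ℕ} (A : Matrix (Fin (2*n)) (Fin (2*n)) ℂ)
    (C : Matrix (Fin (2*m)) (Fin (2*n)) ℂ) : ℕ → Matrix (Fin (2*m)) (Fin (2*n)) ℂ
  | 0 => -(Vvac m * C)
  | (k+1) => Lrec A C k * (-(flat A)) + C * A ^ k * (flat C * Vvac m * C)

lemma cascadeC_mul_pow {n m : ℕ} (A : Matrix (Fin (2*n)) (Fin (2*n)) ℂ)
    (C : Matrix (Fin (2*m)) (Fin (2*n)) ℂ) (k : ℕ) :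
    cascadeC A C * (cascadeA A C) ^ k =
      Matrix.fromCols (Lrec A C k) (C * A ^ k) := by
  induction k with
  | zero => simp [cascadeC, Lrec]
  | succ k ih =>
    rw [pow_succ, ← Matrix.mul_assoc, ih, cascadeA, fromCols_mul_fromBlocks]
    simp [Lrec, pow_succ, Matrix.mul_assoc]

/-- Claim 2 in Appendix B: for two QLSs whose cascade realisations
are related through the lower block triangular similarity, the observability-type
rows annihilate `[T₄♭ - T₁♭; -T₃♭]`. -/
theorem obs_annihilates_difference {n m : ℕ}
    (A A' : Matrix (Fin (2*n)) (Fin (2*n)) ℂ)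
    (C C' : Matrix (Fin (2*m)) (Fin (2*n)) ℂ)
    (hQLS : IsQLS A C) (hQLS' : IsQLS A' C')
    (T₁ T₃ T₄ : Matrix (Fin (2*n)) (Fin (2*n)) ℂ)
    (h1 : ∀ k : ℕ, cascadeC A' C' * (cascadeA A' C') ^ k =
      cascadeC A C * (cascadeA A C) ^ k *
        Matrix.fromBlocks (flat T₄) 0 (-(flat T₃)) (flat T₁))
    (h2 : ∀ k : ℕ, cascadeC A' C' * (cascadeA A' C') ^ k * cascadeB A' C' =
      cascadeC A C * (cascadeA A C) ^ k * cascadeB A C) :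
    ∀ k : ℕ, cascadeC A C * (cascadeA A C) ^ k *
      Matrix.fromRows (flat T₄ - flat T₁) (-(flat T₃)) = 0 := by
  -- Block extraction from h1
  have hb : ∀ j : ℕ, Lrec A' C' j = Lrec A C j * flat T₄ + C * A ^ j * (-(flat T₃)) ∧
      C' * A' ^ j = Lrec A C j * (0 : Matrix (Fin (2*n)) (Fin (2*n)) ℂ) + C * A ^ j * flat T₁ := by
    intro j
    have h := h1 j
    rw [cascadeC_mul_pow, cascadeC_mul_pow, fromCols_mul_fromBlocks] at h
    exact (fromCols_ext_iff _ _ _ _).mp h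
  have hL : ∀ j : ℕ, Lrec A' C' j = Lrec A C j * flat T₄ + C * A ^ j * (-(flat T₃)) :=
    fun j => (hb j).1
  have hRk : ∀ j : ℕ, C' * A' ^ j = C * A ^ j * flat T₁ := by
    intro j
    have := (hb j).2
    rwa [Matrix.mul_zero, zero_add] at this
  have hM : ∀ j : ℕ, Lrec A' C' j * (-(flat C')) + C' * A' ^ j * (-(flat C' * Vvac m)) =
      Lrec A C j * (-(flat C)) + C * A ^ j * (-(flat C * Vvac m)) := by
    intro j
    have h := h2 j
    rwa [cascadeC_mul_pow, cascadeC_mul_pow, cascadeB, cascadeB,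
      fromCols_mul_fromRows, fromCols_mul_fromRows] at h
  -- physical realisability
  have hPR : flat A = -(A + flat C * C) := by
    apply eq_neg_of_add_eq_zero_left
    rw [← hQLS.2.2]; abel
  have hPR' : flat A' = -(A' + flat C' * C') := by
    apply eq_neg_of_add_eq_zero_left
    rw [← hQLS'.2.2]; abel
  have hC0 : C' = C * flat T₁ := by simpa using hRk 0
  -- key commutation annihilator
  have hX : ∀ j : ℕ, C * (A ^ j * (A * flat T₁ - flat T₁ * A')) = 0 := by
    intro j
    have e1 := hRk (j+1)
    have e2 := hRk j
    simp only [pow_succ, ← Matrix.mul_assoc] at e1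
    rw [e2] at e1
    simp only [Matrix.mul_sub, ← Matrix.mul_assoc]
    rw [e1, sub_self]
  have hLX : ∀ k j : ℕ, Lrec A C k * (A ^ j * (A * flat T₁ - flat T₁ * A')) = 0 := by
    intro k
    induction k with
    | zero =>
      intro j
      simp only [Lrec, Matrix.neg_mul, neg_eq_zero, Matrix.mul_assoc]
      rw [hX j, Matrix.mul_zero]
    | succ k ih =>
      intro j
      simp only [Lrec, hPR, neg_neg, Matrix.add_mul, Matrix.mul_add, Matrix.neg_mul,
        Matrix.mul_neg, Matrix.mul_assoc]
      rw [hX j]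
      simp only [Matrix.mul_zero, add_zero, zero_add]
      rw [← Matrix.mul_assoc A, ← pow_succ']
      exact ih (j+1)
  -- main induction
  have key : ∀ j : ℕ, Lrec A C j * (flat T₄ - flat T₁) + C * A ^ j * (-(flat T₃)) = 0 := by
    intro j
    induction j with
    | zero =>
      have e1 := hL 0
      simp only [Lrec, pow_zero, Matrix.mul_one] at e1 ⊢
      rw [hC0] at e1
      have hr : -(Vvac m * C) * (flat T₄ - flat T₁) + C * (-(flat T₃)) =
          (-(Vvac m * C) * flat T₄ + C * (-(flat T₃))) - -(Vvac m * (C * flat T₁)) := by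
        simp only [Matrix.mul_sub, Matrix.neg_mul, Matrix.mul_neg, neg_neg, Matrix.mul_assoc]
        abel
      rw [hr, ← e1, sub_self]
    | succ k ih =>
      have hL'k : Lrec A' C' k = Lrec A C k * flat T₁ := by
        have d : Lrec A' C' k - Lrec A C k * flat T₁ =
            Lrec A C k * (flat T₄ - flat T₁) + C * A ^ k * (-(flat T₃)) := by
          rw [hL k]
          simp only [Matrix.mul_sub]
          abel
        rw [ih] at d
        exact sub_eq_zero.mp d
      have hXk : Lrec A C k * (A * flat T₁) = Lrec A C k * (flat T₁ * A') := by
        have h := hLX k 0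
        rw [pow_zero, Matrix.one_mul, Matrix.mul_sub] at h
        exact sub_eq_zero.mp h
      have e := hM k
      rw [hL'k, hRk k] at e
      have e2 := congrArg (fun M => M * C') e
      simp only [Matrix.add_mul, Matrix.mul_neg, Matrix.neg_mul, Matrix.mul_assoc,
        neg_neg] at e2
      have key2 : Lrec A' C' (k+1) = Lrec A C (k+1) * flat T₁ := by
        show Lrec A' C' k * (-(flat A')) + C' * A' ^ k * (flat C' * Vvac m * C')
           = (Lrec A C k * (-(flat A)) + C * A ^ k * (flat C * Vvac m * C)) * flat T₁
        rw [hL'k, hRk k, hPR, hPR']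
        simp only [neg_neg, Matrix.add_mul, Matrix.mul_add, Matrix.neg_mul, Matrix.mul_neg,
          Matrix.mul_assoc]
        rw [← hC0, hXk]
        rw [← sub_eq_zero] at e2 ⊢
        have e4 := congrArg Neg.neg e2
        simp only [neg_sub, neg_zero] at e4
        rw [← e4]
        abel
      have e1 := hL (k+1)
      rw [key2] at e1
      rw [Matrix.mul_sub, e1]
      abel
  intro k
  rw [cascadeC_mul_pow, fromCols_mul_fromRows]
  exact key k


end
end

section
/- Let (A, C) be a quantum linear system with n modes and m channels (doubled-up matrices with A + A♭ + C♭C = 0), write V := V_vac, and let (Ã, B̃, C̃) be its cascade realisation. Define e₀ := 0 and, for k ≥ 1, e_k := Σ_{j=0}^{k−1} A^j C♭VC (−A♭)^{k−1−j}. Then for every integer k ≥ 1: −VC(−A♭)^k + C A^{k−1} C♭VC − C e_{k−1} A♭ + VC A^k = −Σ_{j=0}^{k−1} C̃ Ã^j B̃ C A^{k−1−j}. -/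
open Matrix

noncomputable section

section Aux
variable {n m : ℕ} (A : Matrix (Fin (2*n)) (Fin (2*n)) ℂ) (C : Matrix (Fin (2*m)) (Fin (2*n)) ℂ)

private lemma e_zero (e : ℕ → Matrix (Fin (2*n)) (Fin (2*n)) ℂ)
    (he : ∀ k : ℕ, e k = ∑ j ∈ Finset.range k,
        A ^ j * (flat C * Vvac m * C) * (-(flat A)) ^ (k - 1 - j)) : e 0 = 0 := by
  simp [he 0]

private lemma e_succ_left (e : ℕ → Matrix (Fin (2*n)) (Fin (2*n)) ℂ)
    (he : ∀ k : ℕ, e k = ∑ j ∈ Finset.range k,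
        A ^ j * (flat C * Vvac m * C) * (-(flat A)) ^ (k - 1 - j)) (k : ℕ) :
    e (k+1) = A * e k + (flat C * Vvac m * C) * (-(flat A)) ^ k := by
  rw [he (k+1), he k, Finset.sum_range_succ']
  simp only [Nat.add_sub_cancel, pow_zero, one_mul, Finset.mul_sum]
  congr 1
  refine Finset.sum_congr rfl fun i hi => ?_
  have h1 : k - (i + 1) = k - 1 - i := by omega
  rw [h1, pow_succ', mul_assoc, mul_assoc, mul_assoc]

private lemma e_succ_right (e : ℕ → Matrix (Fin (2*n)) (Fin (2*n)) ℂ)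
    (he : ∀ k : ℕ, e k = ∑ j ∈ Finset.range k,
        A ^ j * (flat C * Vvac m * C) * (-(flat A)) ^ (k - 1 - j)) (k : ℕ) :
    e (k+1) = A ^ k * (flat C * Vvac m * C) + e k * (-(flat A)) := by
  rw [he (k+1), he k, Finset.sum_range_succ, add_comm]
  simp only [Nat.add_sub_cancel, Nat.sub_self, pow_zero, mul_one, Finset.sum_mul]
  congr 1
  refine Finset.sum_congr rfl fun i hi => ?_
  have hik : i < k := Finset.mem_range.mp hi
  have h1 : k - i = (k - 1 - i) + 1 := by omega
  rw [h1, pow_succ, ← mul_assoc]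

private lemma pow_cascade (e : ℕ → Matrix (Fin (2*n)) (Fin (2*n)) ℂ)
    (he : ∀ k : ℕ, e k = ∑ j ∈ Finset.range k,
        A ^ j * (flat C * Vvac m * C) * (-(flat A)) ^ (k - 1 - j)) (j : ℕ) :
    (cascadeA A C) ^ j =
      Matrix.fromBlocks ((-(flat A)) ^ j) 0 (e j) (A ^ j) := by
  induction j with
  | zero => simp [e_zero A C e he, Matrix.fromBlocks_one]
  | succ j ih =>
      rw [pow_succ', ih, cascadeA, Matrix.fromBlocks_multiply,
        e_succ_left A C e he j, ← pow_succ', ← pow_succ']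
      simp [add_comm]

private lemma markov (e : ℕ → Matrix (Fin (2*n)) (Fin (2*n)) ℂ)
    (he : ∀ k : ℕ, e k = ∑ j ∈ Finset.range k,
        A ^ j * (flat C * Vvac m * C) * (-(flat A)) ^ (k - 1 - j)) (j : ℕ) :
    cascadeC A C * (cascadeA A C) ^ j * cascadeB A C =
      Vvac m * C * (-(flat A)) ^ j * flat C - C * e j * flat C
        - C * A ^ j * (flat C * Vvac m) := by
  rw [pow_cascade A C e he, cascadeC, cascadeB,
    Matrix.fromCols_mul_fromBlocks, Matrix.fromCols_mul_fromRows]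
  simp only [Matrix.neg_mul, Matrix.mul_neg, Matrix.mul_zero, zero_add, add_zero, neg_neg,
    neg_add, Matrix.add_mul, sub_eq_add_neg, Matrix.mul_assoc]

end Aux

/-- the `H` identity of Appendix B, expressing
`-VC(-A♭)^k + CA^{k-1}C♭VC - Ce_{k-1}A♭ + VCA^k` through the cascade Markov
parameters. -/
theorem H_identity {n m : ℕ}
    (A : Matrix (Fin (2*n)) (Fin (2*n)) ℂ) (C : Matrix (Fin (2*m)) (Fin (2*n)) ℂ)
    (hQLS : IsQLS A C)
    (e : ℕ → Matrix (Fin (2*n)) (Fin (2*n)) ℂ)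
    (he : ∀ k : ℕ, e k = ∑ j ∈ Finset.range k,
        A ^ j * (flat C * Vvac m * C) * (-(flat A)) ^ (k - 1 - j)) :
    ∀ k : ℕ, 1 ≤ k →
      -(Vvac m * C) * (-(flat A)) ^ k + C * A ^ (k-1) * (flat C * Vvac m * C)
          - C * e (k-1) * flat A + Vvac m * C * A ^ k
        = -(∑ j ∈ Finset.range k,
            cascadeC A C * (cascadeA A C) ^ j * cascadeB A C * (C * A ^ (k-1-j))) := by
  intro k hk
  obtain ⟨k, rfl⟩ : ∃ k', k = k' + 1 := ⟨k - 1, by omega⟩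
  clear hk
  have hC : flat C * C = -A - flat A := by
    have h := hQLS.2.2
    calc flat C * C = (A + flat A + flat C * C) - A - flat A := by abel
    _ = -A - flat A := by rw [h]; simp
  induction k with
  | zero =>
      rw [Finset.sum_range_one, markov A C e he 0, e_zero A C e he]
      simp only [Nat.sub_self, Nat.sub_zero, pow_zero, pow_one, Matrix.sub_mul,
        Matrix.mul_sub, Matrix.add_mul, Matrix.mul_add, Matrix.neg_mul, Matrix.mul_neg,
        Matrix.mul_assoc, Matrix.mul_one, Matrix.one_mul, Matrix.mul_zero, Matrix.zero_mul,
        neg_neg, neg_add_rev, sub_eq_add_neg, add_zero, zero_add, neg_zero]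
      simp only [hC]
      simp only [Matrix.sub_mul, Matrix.mul_sub, Matrix.add_mul, Matrix.mul_add,
        Matrix.neg_mul, Matrix.mul_neg, Matrix.mul_assoc, Matrix.mul_one, Matrix.one_mul,
        Matrix.mul_zero, Matrix.zero_mul, neg_neg, neg_add_rev, sub_eq_add_neg,
        add_zero, zero_add, neg_zero]
      abel
  | succ k ih =>
      simp only [Nat.add_sub_cancel, Nat.sub_self] at ih ⊢
      rw [Finset.sum_range_succ, markov A C e he (k+1)]
      simp only [Nat.sub_self, pow_zero, Matrix.mul_one]
      have hshift : ∑ j ∈ Finset.range (k+1),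
          cascadeC A C * cascadeA A C ^ j * cascadeB A C * (C * A ^ (k + 1 - j))
        = ∑ j ∈ Finset.range (k+1),
          cascadeC A C * cascadeA A C ^ j * cascadeB A C * (C * A ^ (k - j)) * A := by
        refine Finset.sum_congr rfl fun j hj => ?_
        have hjk : j < k + 1 := Finset.mem_range.mp hj
        have h1 : k + 1 - j = (k - j) + 1 := by omega
        rw [h1, pow_succ]
        simp only [Matrix.mul_assoc]
      rw [hshift, ← Matrix.sum_mul]
      have hS : ∑ j ∈ Finset.range (k+1),
          cascadeC A C * cascadeA A C ^ j * cascadeB A C * (C * A ^ (k - j))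
        = -(-(Vvac m * C) * (-flat A) ^ (k+1) + C * A ^ k * (flat C * Vvac m * C)
            - C * e k * flat A + Vvac m * C * A ^ (k+1)) := by
        rw [ih, neg_neg]
      rw [hS, e_succ_right A C e he k]
      simp only [Matrix.sub_mul, Matrix.mul_sub, Matrix.add_mul, Matrix.mul_add,
        Matrix.neg_mul, Matrix.mul_neg, Matrix.mul_assoc, Matrix.mul_one, Matrix.one_mul,
        Matrix.mul_zero, Matrix.zero_mul, neg_neg, neg_add_rev, sub_eq_add_neg,
        add_zero, zero_add, neg_zero, pow_succ, pow_zero]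
      simp only [hC]
      simp only [Matrix.sub_mul, Matrix.mul_sub, Matrix.add_mul, Matrix.mul_add,
        Matrix.neg_mul, Matrix.mul_neg, Matrix.mul_assoc, Matrix.mul_one, Matrix.one_mul,
        Matrix.mul_zero, Matrix.zero_mul, neg_neg, neg_add_rev, sub_eq_add_neg,
        add_zero, zero_add, neg_zero]
      abel

end
end

section
/- Let A₁, A₂ ∈ ℂ^{2n×2n} and C₁, C₂ ∈ ℂ^{2m×2n} all be doubled-up matrices, suppose the pair (C₂, A₂) is observable, and let T₁ ∈ ℂ^{2n×2n} be a matrix such that C₁A₁^k = C₂A₂^k T₁♭ for all integers k ≥ 0. Then T₁ is doubled-up. -/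
open Matrix

noncomputable section

-- swap matrix
def Smat (a : ℕ) : Matrix (Fin (2*a)) (Fin (2*a)) ℂ :=
  Matrix.reindex (dEquiv a) (dEquiv a) (Matrix.fromBlocks 0 1 1 0)

lemma reindex_mul {a b c : ℕ} {α β γ : Type*} [Fintype α] [Fintype β] [Fintype γ]
    (e₁ : α ≃ Fin a) (e₂ : β ≃ Fin b) (e₃ : γ ≃ Fin c)
    (M : Matrix α β ℂ) (N : Matrix β γ ℂ) :
    (Matrix.reindex e₁ e₂ M) * (Matrix.reindex e₂ e₃ N)
      = Matrix.reindex e₁ e₃ (M * N) := by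
  simp [Matrix.reindex_apply, Matrix.submatrix_mul_equiv]

lemma Smat_mul_Smat (a : ℕ) : Smat a * Smat a = 1 := by
  rw [Smat, reindex_mul]
  have : (Matrix.fromBlocks 0 1 1 0 : Matrix (Fin a ⊕ Fin a) (Fin a ⊕ Fin a) ℂ) *
      Matrix.fromBlocks 0 1 1 0 = 1 := by
    simp [Matrix.fromBlocks_multiply, ← Matrix.fromBlocks_one]
  rw [this, Matrix.reindex_apply, Matrix.submatrix_one_equiv]

lemma Jmat_mul_Jmat (a : ℕ) : Jmat a * Jmat a = 1 := by
  rw [Jmat, reindex_mul]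
  have : (Matrix.fromBlocks 1 0 0 (-1) : Matrix (Fin a ⊕ Fin a) (Fin a ⊕ Fin a) ℂ) *
      Matrix.fromBlocks 1 0 0 (-1) = 1 := by
    simp [Matrix.fromBlocks_multiply, ← Matrix.fromBlocks_one]
  rw [this, Matrix.reindex_apply, Matrix.submatrix_one_equiv]

lemma Jmat_conjTranspose (a : ℕ) : (Jmat a)ᴴ = Jmat a := by
  rw [Jmat, Matrix.reindex_apply, Matrix.conjTranspose_submatrix]
  congr 1
  simp [Matrix.fromBlocks_conjTranspose]

lemma Smat_conjTranspose (a : ℕ) : (Smat a)ᴴ = Smat a := by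
  rw [Smat, Matrix.reindex_apply, Matrix.conjTranspose_submatrix]
  congr 1
  simp [Matrix.fromBlocks_conjTranspose]

lemma Smat_mul_Jmat (a : ℕ) : Smat a * Jmat a = -(Jmat a * Smat a) := by
  rw [Smat, Jmat, reindex_mul, reindex_mul]
  have : (Matrix.fromBlocks 0 1 1 0 : Matrix (Fin a ⊕ Fin a) (Fin a ⊕ Fin a) ℂ) *
      Matrix.fromBlocks 1 0 0 (-1) =
      -(Matrix.fromBlocks 1 0 0 (-1) * Matrix.fromBlocks 0 1 1 0) := by
    rw [Matrix.fromBlocks_multiply, Matrix.fromBlocks_multiply]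
    norm_num
    rw [Matrix.fromBlocks_neg]
    norm_num
  rw [this]
  exact congrFun (congrFun (Matrix.submatrix_neg _) _) _

lemma reindex_map {a b : ℕ} {α β : Type*} [Fintype α] [Fintype β]
    (e : α ≃ Fin a) (f : β ≃ Fin b) (M : Matrix α β ℂ) (g : ℂ → ℂ) :
    (Matrix.reindex e f M).map g = Matrix.reindex e f (M.map g) := by
  simp [Matrix.reindex_apply, Matrix.submatrix_map]

lemma sandwich {a b : ℕ} (Y : Matrix (Fin a ⊕ Fin a) (Fin b ⊕ Fin b) ℂ) :
    (Matrix.fromBlocks 0 1 1 0 : Matrix (Fin a ⊕ Fin a) (Fin a ⊕ Fin a) ℂ) * Y *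
      (Matrix.fromBlocks 0 1 1 0 : Matrix (Fin b ⊕ Fin b) (Fin b ⊕ Fin b) ℂ)
      = Matrix.fromBlocks Y.toBlocks₂₂ Y.toBlocks₂₁ Y.toBlocks₁₂ Y.toBlocks₁₁ := by
  conv_lhs => rw [← Matrix.fromBlocks_toBlocks Y]
  rw [Matrix.fromBlocks_multiply, Matrix.fromBlocks_multiply]
  simp

lemma toBlocks_map {p q r s : Type*} (M : Matrix (p ⊕ q) (r ⊕ s) ℂ) (g : ℂ → ℂ) :
    (M.map g).toBlocks₁₁ = M.toBlocks₁₁.map g ∧ (M.map g).toBlocks₁₂ = M.toBlocks₁₂.map g ∧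
    (M.map g).toBlocks₂₁ = M.toBlocks₂₁.map g ∧ (M.map g).toBlocks₂₂ = M.toBlocks₂₂.map g := by
  refine ⟨?_, ?_, ?_, ?_⟩ <;> rfl

lemma map_conj_conj {p q : Type*} (M : Matrix p q ℂ) :
    (M.map (starRingEnd ℂ)).map (starRingEnd ℂ) = M := by
  ext i j; simp

lemma du_iff {a b : ℕ} (X : Matrix (Fin (2*a)) (Fin (2*b)) ℂ) :
    DoubledUp X ↔ Smat a * X.map (starRingEnd ℂ) * Smat b = X := by
  constructor
  · rintro ⟨Xm, Xp, rfl⟩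
    rw [Smat, Smat, reindex_map, reindex_mul, reindex_mul, sandwich,
      Matrix.fromBlocks_map]
    congr 1
    simp only [Matrix.toBlocks_fromBlocks₁₁, Matrix.toBlocks_fromBlocks₁₂,
      Matrix.toBlocks_fromBlocks₂₁, Matrix.toBlocks_fromBlocks₂₂, map_conj_conj]
  · intro h
    set Y := (Matrix.reindex (dEquiv a) (dEquiv b)).symm X with hY
    have hX : X = Matrix.reindex (dEquiv a) (dEquiv b) Y := by simp [hY]
    refine ⟨Y.toBlocks₁₁, Y.toBlocks₁₂, ?_⟩
    rw [hX] at h ⊢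
    rw [Smat, Smat, reindex_map, reindex_mul, reindex_mul, sandwich] at h
    have h' := (Matrix.reindex (dEquiv a) (dEquiv b)).injective h
    have h21 := congrArg Matrix.toBlocks₂₁ h'
    have h22 := congrArg Matrix.toBlocks₂₂ h'
    simp only [Matrix.toBlocks_fromBlocks₂₁, Matrix.toBlocks_fromBlocks₂₂,
      (toBlocks_map Y (starRingEnd ℂ)).1, (toBlocks_map Y (starRingEnd ℂ)).2.1] at h21 h22
    congr 1
    conv_lhs => rw [← Matrix.fromBlocks_toBlocks Y]
    rw [← h21, ← h22]



lemma SXS_eq {a b : ℕ} {M N : Matrix (Fin (2*a)) (Fin (2*b)) ℂ}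
    (h : Smat a * M * Smat b = N) : M = Smat a * N * Smat b := by
  rw [← h]
  simp only [← Matrix.mul_assoc]
  rw [Smat_mul_Smat, Matrix.one_mul, Matrix.mul_assoc, Smat_mul_Smat, Matrix.mul_one]

lemma du_iff' {a b : ℕ} (X : Matrix (Fin (2*a)) (Fin (2*b)) ℂ) :
    DoubledUp X ↔ X.map (starRingEnd ℂ) = Smat a * X * Smat b := by
  rw [du_iff]
  constructor
  · exact SXS_eq
  · intro h
    rw [h]
    simp only [← Matrix.mul_assoc]
    rw [Smat_mul_Smat, Matrix.one_mul, Matrix.mul_assoc, Smat_mul_Smat, Matrix.mul_one]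

lemma du_one {a : ℕ} : DoubledUp (1 : Matrix (Fin (2*a)) (Fin (2*a)) ℂ) := by
  rw [du_iff]
  have : (1 : Matrix (Fin (2*a)) (Fin (2*a)) ℂ).map (starRingEnd ℂ) = 1 :=
    Matrix.map_one _ (map_zero _) (map_one _)
  rw [this, mul_one, Smat_mul_Smat]

lemma du_mul {a b c : ℕ} {X : Matrix (Fin (2*a)) (Fin (2*b)) ℂ}
    {Y : Matrix (Fin (2*b)) (Fin (2*c)) ℂ}
    (hX : DoubledUp X) (hY : DoubledUp Y) : DoubledUp (X * Y) := by
  rw [du_iff'] at hX hY ⊢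
  rw [Matrix.map_mul, hX, hY]
  have hmid : Smat b * (Smat b * (Y * Smat c)) = Y * Smat c := by
    rw [← Matrix.mul_assoc, Smat_mul_Smat, Matrix.one_mul]
  simp only [Matrix.mul_assoc, hmid]

lemma du_pow {a : ℕ} {A : Matrix (Fin (2*a)) (Fin (2*a)) ℂ} (hA : DoubledUp A) (k : ℕ) :
    DoubledUp (A ^ k) := by
  induction k with
  | zero => simpa using du_one
  | succ k ih => rw [pow_succ]; exact du_mul ih hA

lemma Jmat_map_conj (a : ℕ) : (Jmat a).map (starRingEnd ℂ) = Jmat a := by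
  rw [Jmat, reindex_map]
  congr 1
  rw [Matrix.fromBlocks_map]
  have h1 : (1 : Matrix (Fin a) (Fin a) ℂ).map (starRingEnd ℂ) = 1 :=
    Matrix.map_one _ (map_zero _) (map_one _)
  have h0 : (0 : Matrix (Fin a) (Fin a) ℂ).map (starRingEnd ℂ) = 0 := by
    ext i j; simp
  have hn : (-1 : Matrix (Fin a) (Fin a) ℂ).map (starRingEnd ℂ) = -1 := by
    ext i j
    simp [Matrix.neg_apply, Matrix.one_apply, apply_ite (starRingEnd ℂ)]
  rw [h1, h0, hn]

lemma du_flat {a b : ℕ} {X : Matrix (Fin (2*a)) (Fin (2*b)) ℂ} (hX : DoubledUp X) :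
    DoubledUp (flat X) := by
  rw [du_iff'] at hX ⊢
  have hconjT : (Xᴴ).map (starRingEnd ℂ) = (X.map (starRingEnd ℂ))ᴴ := by
    ext i j; simp
  have hJS : Jmat b * Smat b = -(Smat b * Jmat b) := by
    rw [Smat_mul_Jmat, neg_neg]
  calc (flat X).map (starRingEnd ℂ)
      = Jmat b * (X.map (starRingEnd ℂ))ᴴ * Jmat a := by
        rw [flat, Matrix.map_mul, Matrix.map_mul, Jmat_map_conj, Jmat_map_conj, hconjT]
    _ = Jmat b * (Smat a * X * Smat b)ᴴ * Jmat a := by rw [hX]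
    _ = Jmat b * (Smat b * (Xᴴ * Smat a)) * Jmat a := by
        rw [Matrix.conjTranspose_mul, Matrix.conjTranspose_mul, Smat_conjTranspose,
          Smat_conjTranspose, Matrix.mul_assoc]
    _ = (Jmat b * Smat b) * (Xᴴ * (Smat a * Jmat a)) := by simp only [Matrix.mul_assoc]
    _ = (-(Smat b * Jmat b)) * (Xᴴ * (-(Jmat a * Smat a))) := by
        rw [hJS, Smat_mul_Jmat a]
    _ = Smat b * flat X * Smat a := by
        rw [flat]
        simp only [Matrix.mul_neg, Matrix.neg_mul, neg_neg, Matrix.mul_assoc]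

lemma flat_flat {a b : ℕ} (X : Matrix (Fin (2*a)) (Fin (2*b)) ℂ) : flat (flat X) = X := by
  rw [flat, flat, Matrix.conjTranspose_mul, Matrix.conjTranspose_mul,
    Jmat_conjTranspose, Jmat_conjTranspose, Matrix.conjTranspose_conjTranspose]
  calc Jmat a * (Jmat a * (X * Jmat b)) * Jmat b
      = (Jmat a * Jmat a) * (X * (Jmat b * Jmat b)) := by simp only [Matrix.mul_assoc]
    _ = X := by rw [Jmat_mul_Jmat, Jmat_mul_Jmat, Matrix.one_mul, Matrix.mul_one]

lemma mul_left_cancel_of_rank {I J K : Type*} [Fintype I] [Fintype J] [Fintype K]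
    [DecidableEq J] (O : Matrix I J ℂ) (h : O.rank = Fintype.card J)
    {X Y : Matrix J K ℂ} (hXY : O * X = O * Y) : X = Y := by
  have hinj : Function.Injective O.mulVecLin := by
    rw [← LinearMap.ker_eq_bot]
    have hrn := LinearMap.finrank_range_add_finrank_ker O.mulVecLin
    rw [Matrix.rank] at h
    rw [h] at hrn
    have : Module.finrank ℂ (J → ℂ) = Fintype.card J := Module.finrank_fintype_fun_eq_card ℂ
    rw [this] at hrn
    have hker : Module.finrank ℂ (LinearMap.ker O.mulVecLin) = 0 := by omega
    rw [Submodule.finrank_eq_zero] at hker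
    exact hker
  ext j k
  have hcol : O.mulVecLin (fun j => X j k) = O.mulVecLin (fun j => Y j k) := by
    ext i
    have := congrFun (congrFun hXY i) k
    simpa [Matrix.mulVecLin_apply, Matrix.mulVec, Matrix.mul_apply, dotProduct] using this
  exact congrFun (hinj hcol) j


/-- Step 3 in Appendix B: if `C₁A₁^k = C₂A₂^k T₁♭` for all `k` with
`(C₂, A₂)` observable and all system matrices doubled-up, then `T₁` is doubled-up. -/
theorem T1_doubled_up {n m : ℕ}
    (A₁ A₂ : Matrix (Fin (2*n)) (Fin (2*n)) ℂ)
    (C₁ C₂ : Matrix (Fin (2*m)) (Fin (2*n)) ℂ)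
    (hA₁ : DoubledUp A₁) (hA₂ : DoubledUp A₂)
    (hC₁ : DoubledUp C₁) (hC₂ : DoubledUp C₂)
    (hobs : Observable C₂ A₂)
    (T₁ : Matrix (Fin (2*n)) (Fin (2*n)) ℂ)
    (hT : ∀ k : ℕ, C₁ * A₁ ^ k = C₂ * A₂ ^ k * flat T₁) :
    DoubledUp T₁ := by
  rw [Observable] at hobs
  set S := flat T₁ with hS
  set S' := Smat n * S.map (starRingEnd ℂ) * Smat n with hS'
  have key : ∀ k : ℕ, C₂ * A₂ ^ k * S' = C₂ * A₂ ^ k * S := by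
    intro k
    have h1 : DoubledUp (C₁ * A₁ ^ k) := du_mul hC₁ (du_pow hA₁ k)
    have h2 : DoubledUp (C₂ * A₂ ^ k) := du_mul hC₂ (du_pow hA₂ k)
    rw [du_iff'] at h1 h2
    have hconj := congrArg (Matrix.map · (starRingEnd ℂ)) (hT k)
    rw [h1, Matrix.map_mul, h2, hT k] at hconj
    have cancel : ∀ M : Matrix (Fin (2*m)) (Fin (2*n)) ℂ,
        Smat m * (Smat m * M * Smat n) * Smat n = M := by
      intro M
      simp only [← Matrix.mul_assoc]
      rw [Smat_mul_Smat, Matrix.one_mul, Matrix.mul_assoc, Smat_mul_Smat, Matrix.mul_one]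
    have h3 := congrArg (fun M => Smat m * M * Smat n) hconj
    rw [cancel] at h3
    rw [hS']
    simp only [← Matrix.mul_assoc] at h3 ⊢
    rw [Smat_mul_Smat, Matrix.one_mul] at h3
    exact h3.symm
  have hmulO : ∀ X : Matrix (Fin (2*n)) (Fin (2*n)) ℂ,
      ∀ (p : Fin (Fintype.card (Fin (2*n))) × Fin (2*m)) (j : Fin (2*n)),
      (obsMat C₂ A₂ * X) p j = (C₂ * A₂ ^ (p.1 : ℕ) * X) p.2 j := by
    intro X p j
    simp [obsMat, Matrix.mul_apply]
  have hOSS : obsMat C₂ A₂ * S' = obsMat C₂ A₂ * S := by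
    ext p j
    rw [hmulO, hmulO, key p.1]
  have hSS : S' = S := mul_left_cancel_of_rank (obsMat C₂ A₂) hobs hOSS
  have hduS : DoubledUp S := by
    rw [du_iff]
    rw [hS'] at hSS
    exact hSS
  have := du_flat hduS
  rwa [hS, flat_flat] at this

end
end

section
/- Let A, A₀ ∈ ℂ^{2n×2n}, C, C₂ ∈ ℂ^{2m×2n}, and let T₃ ∈ ℂ^{2n×2n} be invertible with A = T₃ A₀ T₃⁻¹ and C = C₂ T₃⁻¹. If the physical realisability condition A + A♭ + C♭C = 0 holds, then (T₃♭T₃) A₀ + A₀♭ (T₃♭T₃) + C₂♭ C₂ = 0. -/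
open Matrix

noncomputable section

lemma flat_mul {a b c : ℕ} (X : Matrix (Fin (2*a)) (Fin (2*b)) ℂ)
    (Y : Matrix (Fin (2*b)) (Fin (2*c)) ℂ) :
    flat (X * Y) = flat Y * flat X := by
  unfold flat
  rw [Matrix.conjTranspose_mul]
  have : Jmat c * (Yᴴ * Xᴴ) * Jmat a
      = (Jmat c * Yᴴ * Jmat b) * (Jmat b * Xᴴ * Jmat a) := by
    simp only [Matrix.mul_assoc]
    rw [← Matrix.mul_assoc (Jmat b) (Jmat b), Jmat_sq, Matrix.one_mul]
  exact this

lemma flat_one {a : ℕ} : flat (1 : Matrix (Fin (2*a)) (Fin (2*a)) ℂ) = 1 := by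
  unfold flat
  simp [Jmat_sq]

/-- transport of the physical realisability condition under a
similarity `A = T₃A₀T₃⁻¹`, `C = C₂T₃⁻¹`. -/
theorem realisability_transport_T3 {n m : ℕ}
    (A A₀ : Matrix (Fin (2*n)) (Fin (2*n)) ℂ)
    (C C₂ : Matrix (Fin (2*m)) (Fin (2*n)) ℂ)
    (T₃ : Matrix (Fin (2*n)) (Fin (2*n)) ℂ) (hT : IsUnit T₃)
    (hA : A = T₃ * A₀ * T₃⁻¹) (hC : C = C₂ * T₃⁻¹)
    (hphys : A + flat A + flat C * C = 0) :
    (flat T₃ * T₃) * A₀ + flat A₀ * (flat T₃ * T₃) + flat C₂ * C₂ = 0 := by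
  have hinv : T₃⁻¹ * T₃ = 1 := Matrix.nonsing_inv_mul T₃ (Matrix.isUnit_iff_isUnit_det T₃ |>.mp hT)
  have hfinv : flat T₃ * flat T₃⁻¹ = 1 := by
    rw [← flat_mul, hinv, flat_one]
  have key : flat T₃ * (A + flat A + flat C * C) * T₃ = 0 := by
    rw [hphys, Matrix.mul_zero, Matrix.zero_mul]
  have e1 : flat T₃ * A * T₃ = (flat T₃ * T₃) * A₀ := by
    rw [hA]
    simp only [Matrix.mul_assoc, hinv, Matrix.mul_one]
  have e2 : flat T₃ * flat A * T₃ = flat A₀ * (flat T₃ * T₃) := by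
    rw [hA, flat_mul, flat_mul]
    simp only [← Matrix.mul_assoc, hfinv, Matrix.one_mul]
  have e3 : flat T₃ * (flat C * C) * T₃ = flat C₂ * C₂ := by
    rw [hC, flat_mul]
    simp only [← Matrix.mul_assoc, hfinv, Matrix.one_mul]
    simp only [Matrix.mul_assoc, hinv, Matrix.mul_one]
  calc (flat T₃ * T₃) * A₀ + flat A₀ * (flat T₃ * T₃) + flat C₂ * C₂
      = flat T₃ * (A + flat A + flat C * C) * T₃ := by
        rw [Matrix.mul_add, Matrix.mul_add, Matrix.add_mul, Matrix.add_mul, e1, e2, e3]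
    _ = 0 := key

end
end
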